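/- Let $G \sim \mathcal{N}(0, I_d)$, $\sigma \in \mathbb{R}^{d\times d}$ invertible, $\tau > 0$, $\mu \in \mathbb{R}^d$, and $h: \mathbb{R}^d \to \mathbb{R}$ Lipschitz with constant $L$. Setting $X = x + \mu\tau + \sigma\sqrt\tau G$ and $\hat X = x + \mu\tau - \sigma\sqrt\tau G$, the second moment of the antithetic Malliavin estimator is controlled: $\mathbb{E}\Big[\Big\|\sigma^{-\top}\frac{\sqrt\tau G}{\tau}\cdot\frac12(h(X) - h(\hat X))\Big\|^2\Big] \le L^2\,\|\sigma^{-\top}\|^2\,\|\sigma\|^2\,\mathbb{E}[\|G\|^4]$, a bound independent of $\tau$ (no blow-up as $\tau \to 0$). -/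
import Mathlib


open MeasureTheory ProbabilityTheory

lemma aux_map_eval_pi {d : ℕ} (μ : Fin d → Measure ℝ) [∀ i, IsProbabilityMeasure (μ i)]
    (i : Fin d) : (Measure.pi μ).map (fun y => y i) = μ i := by
  ext s hs
  rw [Measure.map_apply (measurable_pi_apply i) hs]
  have hpre : (fun y : Fin d → ℝ => y i) ⁻¹' s
      = Set.pi Set.univ (Function.update (fun _ => Set.univ) i s) := Set.eval_preimage
  rw [hpre, Measure.pi_pi, Finset.prod_eq_single i]
  · simp
  · intro j _ hj
    simp [Function.update_of_ne hj]
  · simp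

lemma aux_int4 : Integrable (fun t : ℝ => t ^ 4) (gaussianReal 0 1) := by
  rw [gaussianReal_of_var_ne_zero _ one_ne_zero,
    integrable_withDensity_iff (measurable_gaussianPDF _ _)
      (ae_of_all _ fun x => ENNReal.ofReal_lt_top)]
  have h1 : Integrable (fun x : ℝ => x ^ ((4:ℕ):ℝ) * Real.exp (-(1/2) * x ^ 2)) :=
    integrable_rpow_mul_exp_neg_mul_sq (by norm_num) (by norm_num)
  have h2 := h1.const_mul ((Real.sqrt (2 * Real.pi))⁻¹)
  refine h2.congr (ae_of_all _ fun x => ?_)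
  simp only [gaussianPDF]
  rw [ENNReal.toReal_ofReal (gaussianPDFReal_nonneg _ _ _)]
  simp only [gaussianPDFReal, Real.rpow_natCast]
  norm_num
  ring_nf

/-- The second moment of the antithetic Malliavin estimator is bounded uniformly in `τ`:
for `G ∼ 𝒩(0, I_d)`, `h` Lipschitz with constant `L`, `X = x + τμ + σ√τ G`,
`X̂ = x + τμ - σ√τ G`,
`E[‖σ⁻ᵀ (√τ G / τ) · ½(h(X) - h(X̂))‖²] ≤ L² ‖σ⁻ᵀ‖² ‖σ‖² E[‖G‖⁴]`. -/
theorem antithetic_malliavin_second_moment_bound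
    (d : ℕ) (τ : ℝ) (hτ : 0 < τ) (L : ℝ) (hL : 0 ≤ L)
    (μv x : EuclideanSpace ℝ (Fin d))
    (σ : Matrix (Fin d) (Fin d) ℝ) (hσ : IsUnit σ.det)
    (h : EuclideanSpace ℝ (Fin d) → ℝ)
    (hLip : LipschitzWith (Real.toNNReal L) h) :
    (∫ y : Fin d → ℝ,
        ‖((Real.sqrt τ / τ) *
            ((1:ℝ)/2 *
              (h (x + τ • μv + Real.sqrt τ •
                    (Matrix.toEuclideanCLM (𝕜 := ℝ) σ) ((WithLp.equiv 2 (Fin d → ℝ)).symm y))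
               - h (x + τ • μv - Real.sqrt τ •
                    (Matrix.toEuclideanCLM (𝕜 := ℝ) σ) ((WithLp.equiv 2 (Fin d → ℝ)).symm y))))) •
          (Matrix.toEuclideanCLM (𝕜 := ℝ) (σ⁻¹).transpose)
            ((WithLp.equiv 2 (Fin d → ℝ)).symm y)‖ ^ 2
        ∂(Measure.pi fun _ : Fin d => gaussianReal 0 1))
    ≤ L ^ 2 * ‖Matrix.toEuclideanCLM (𝕜 := ℝ) (σ⁻¹).transpose‖ ^ 2 *
        ‖Matrix.toEuclideanCLM (𝕜 := ℝ) σ‖ ^ 2 *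
        ∫ y : Fin d → ℝ, ‖(WithLp.equiv 2 (Fin d → ℝ)).symm y‖ ^ 4
          ∂(Measure.pi fun _ : Fin d => gaussianReal 0 1) := by
  set A := Matrix.toEuclideanCLM (𝕜 := ℝ) (σ⁻¹).transpose with hA
  set B := Matrix.toEuclideanCLM (𝕜 := ℝ) σ with hB
  set g : (Fin d → ℝ) → EuclideanSpace ℝ (Fin d) :=
    fun y => (WithLp.equiv 2 (Fin d → ℝ)).symm y with hgdef
  set C : ℝ := L ^ 2 * ‖A‖ ^ 2 * ‖B‖ ^ 2 with hCdef
  set π₀ : Measure (Fin d → ℝ) := Measure.pi fun _ : Fin d => gaussianReal 0 1 with hπ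
  have hst : 0 < Real.sqrt τ := Real.sqrt_pos.mpr hτ
  have hstsq : Real.sqrt τ * Real.sqrt τ = τ := Real.mul_self_sqrt hτ.le
  -- pointwise bound
  have hpt : ∀ y : Fin d → ℝ,
      ‖((Real.sqrt τ / τ) *
          ((1:ℝ)/2 *
            (h (x + τ • μv + Real.sqrt τ • B (g y))
             - h (x + τ • μv - Real.sqrt τ • B (g y))))) • A (g y)‖ ^ 2
        ≤ C * ‖g y‖ ^ 4 := by
    intro y
    set X := x + τ • μv + Real.sqrt τ • B (g y) with hX
    set X' := x + τ • μv - Real.sqrt τ • B (g y) with hX'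
    have hdiff : X - X' = (2 * Real.sqrt τ) • B (g y) := by
      rw [hX, hX']
      rw [two_mul, add_smul]
      abel
    have e1 : ‖X - X'‖ = 2 * Real.sqrt τ * ‖B (g y)‖ := by
      rw [hdiff, norm_smul, Real.norm_eq_abs, abs_of_pos (by positivity)]
    have e2 : |h X - h X'| ≤ L * (2 * Real.sqrt τ * ‖B (g y)‖) := by
      have := hLip.dist_le_mul X X'
      rw [Real.dist_eq, dist_eq_norm, e1, Real.coe_toNNReal L hL] at this
      exact this
    have e3 : ‖B (g y)‖ ≤ ‖B‖ * ‖g y‖ := B.le_opNorm _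
    have e4 : ‖A (g y)‖ ≤ ‖A‖ * ‖g y‖ := A.le_opNorm _
    have h5 : |(Real.sqrt τ / τ) * ((1:ℝ)/2 * (h X - h X'))| ≤ L * ‖B‖ * ‖g y‖ := by
      have habs : |(Real.sqrt τ / τ) * ((1:ℝ)/2 * (h X - h X'))|
          = (Real.sqrt τ / τ) * ((1:ℝ)/2 * |h X - h X'|) := by
        rw [abs_mul, abs_mul, abs_of_pos (by positivity : (0:ℝ) < Real.sqrt τ / τ)]
        norm_num
      rw [habs]
      have e2' : |h X - h X'| ≤ L * (2 * Real.sqrt τ * (‖B‖ * ‖g y‖)) := by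
        refine e2.trans ?_
        have : 2 * Real.sqrt τ * ‖B (g y)‖ ≤ 2 * Real.sqrt τ * (‖B‖ * ‖g y‖) :=
          mul_le_mul_of_nonneg_left e3 (by positivity)
        nlinarith [this, hL]
      calc (Real.sqrt τ / τ) * ((1:ℝ)/2 * |h X - h X'|)
          ≤ (Real.sqrt τ / τ) * ((1:ℝ)/2 * (L * (2 * Real.sqrt τ * (‖B‖ * ‖g y‖)))) := by
            refine mul_le_mul_of_nonneg_left ?_ (by positivity)
            exact mul_le_mul_of_nonneg_left e2' (by norm_num)
        _ = L * ‖B‖ * ‖g y‖ := by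
            rw [← hstsq]
            have hne : Real.sqrt τ ≠ 0 := hst.ne'
            rw [div_mul_eq_mul_div, div_eq_iff (mul_ne_zero hne hne)]
            ring_nf
            rw [Real.sqrt_sq hst.le]
    have h6 : ‖((Real.sqrt τ / τ) * ((1:ℝ)/2 * (h X - h X'))) • A (g y)‖
        ≤ (L * ‖B‖ * ‖g y‖) * (‖A‖ * ‖g y‖) := by
      rw [norm_smul, Real.norm_eq_abs]
      exact mul_le_mul h5 e4 (norm_nonneg _) (by positivity)
    calc ‖((Real.sqrt τ / τ) * ((1:ℝ)/2 * (h X - h X'))) • A (g y)‖ ^ 2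
        ≤ ((L * ‖B‖ * ‖g y‖) * (‖A‖ * ‖g y‖)) ^ 2 :=
          pow_le_pow_left₀ (norm_nonneg _) h6 2
      _ = C * ‖g y‖ ^ 4 := by rw [hCdef]; ring
  -- integrability of the bound
  have hint4 : ∀ i : Fin d, Integrable (fun y : Fin d → ℝ => (y i) ^ 4) π₀ := by
    intro i
    have hi := aux_int4
    rw [← aux_map_eval_pi (fun _ : Fin d => gaussianReal 0 1) i] at hi
    exact (integrable_map_measure ((measurable_id.pow_const 4).aestronglyMeasurable)
      (measurable_pi_apply i).aemeasurable).mp hi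
  have hsum : Integrable (fun y : Fin d → ℝ => (d : ℝ) * ∑ i : Fin d, (y i) ^ 4) π₀ :=
    (integrable_finset_sum _ fun i _ => hint4 i).const_mul _
  have hg4eq : ∀ y : Fin d → ℝ, ‖g y‖ ^ 4 = (∑ i : Fin d, (y i) ^ 2) ^ 2 := by
    intro y
    have h2 : ‖g y‖ ^ 2 = ∑ i : Fin d, (y i) ^ 2 := by
      rw [EuclideanSpace.norm_eq]
      rw [Real.sq_sqrt (by positivity)]
      refine Finset.sum_congr rfl fun i _ => ?_
      rw [Real.norm_eq_abs, sq_abs]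
      rfl
    calc ‖g y‖ ^ 4 = (‖g y‖ ^ 2) ^ 2 := by ring
      _ = (∑ i : Fin d, (y i) ^ 2) ^ 2 := by rw [h2]
  have hnormg : Integrable (fun y : Fin d → ℝ => ‖g y‖ ^ 4) π₀ := by
    refine hsum.mono' ?_ (ae_of_all _ fun y => ?_)
    · exact (((PiLp.continuous_toLp 2 fun _ : Fin d => ℝ).norm).pow 4).aestronglyMeasurable
    · rw [Real.norm_eq_abs, abs_of_nonneg (by positivity), hg4eq y]
      have := sq_sum_le_card_mul_sum_sq (s := (Finset.univ : Finset (Fin d)))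
        (f := fun i => (y i) ^ 2)
      simpa [← pow_mul] using this
  have hbound : Integrable (fun y : Fin d → ℝ => C * ‖g y‖ ^ 4) π₀ := hnormg.const_mul C
  calc (∫ y : Fin d → ℝ,
        ‖((Real.sqrt τ / τ) *
            ((1:ℝ)/2 *
              (h (x + τ • μv + Real.sqrt τ • B (g y))
               - h (x + τ • μv - Real.sqrt τ • B (g y))))) • A (g y)‖ ^ 2 ∂π₀)
      ≤ ∫ y : Fin d → ℝ, C * ‖g y‖ ^ 4 ∂π₀ :=
        integral_mono_of_nonneg (ae_of_all _ fun y => by positivity) hbound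
          (ae_of_all _ fun y => hpt y)
    _ = C * ∫ y : Fin d → ℝ, ‖g y‖ ^ 4 ∂π₀ := integral_const_mul _ _
    _ = L ^ 2 * ‖A‖ ^ 2 * ‖B‖ ^ 2 * ∫ y : Fin d → ℝ, ‖g y‖ ^ 4 ∂π₀ := by rw [hCdef]
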